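/- Under the no-crossing hypothesis, for every unit i ∈ N, every block index k ∈ {1,…,K}, every period t ∈ T_k and every scenario ω ∈ Ω, the excess computed within block k equals the global excess of the concatenated solution: max{0, S_i^t(k) + R_i^t(k) − D_i^{t−1}(k) − d_i^{tω}} = H_i^{tω}, where H_i^{tω} = max{0, S_i^t + R_i^t − D_i^{t−1} − d_i^{tω}} is computed from the concatenated solution on T with the original initial stock s⁰_i. -/

import Mathlib

/-!
Sums over periods split additively at a breakpoint; for the receipts this needs the no-crossing
hypothesis, so that everything sent before the breakpoint has arrived just before it. Hence,
at every period of block `k`, the global stock balance equals the block balance restarted from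
the global stock available at the end of block `k - 1`, and by induction on `k` that available
stock is exactly the recursively defined block initial stock.
-/

open Finset

/-- Accumulated stock of unit `i` up to period `t`: initial stock plus extra stock shared
to `i` by the groups it belongs to at periods `t'` with `start ≤ t' ≤ t`. -/
def Sder {N P : Type} [Fintype P] [DecidableEq N]
    (Ngrp : P → Finset N) (s0 : N → ℤ) (s : N → P → ℕ → ℕ)
    (start : ℕ) (i : N) (t : ℕ) : ℤ :=
  s0 i + ∑ p : P, (if i ∈ Ngrp p then ∑ t' ∈ Finset.Icc start t, (s i p t' : ℤ) else 0)

/-- Amount received by unit `i` until period `t`: shipments `x j i t'` sent at periods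
`start ≤ t' ≤ t` that have arrived by `t`, i.e. with `t' + ℓ j i ≤ t`. -/
def Rder {N : Type} [Fintype N] [DecidableEq N]
    (W : Finset (N × N)) (ℓ : N → N → ℕ) (x : N → N → ℕ → ℕ)
    (start : ℕ) (i : N) (t : ℕ) : ℤ :=
  ∑ j ∈ Finset.univ.filter (fun j => (j, i) ∈ W),
    ∑ t' ∈ (Finset.Icc start t).filter (fun t' => t' + ℓ j i ≤ t), (x j i t' : ℤ)

/-- Amount delivered by unit `i` until period `t` (zero when `t < start`). -/
def Dder {N : Type} [Fintype N] [DecidableEq N]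
    (W : Finset (N × N)) (x : N → N → ℕ → ℕ)
    (start : ℕ) (i : N) (t : ℕ) : ℤ :=
  ∑ j ∈ Finset.univ.filter (fun j => (i, j) ∈ W),
    ∑ t' ∈ Finset.Icc start t, (x i j t' : ℤ)

/-- Effective excess of unit `i` at period `t` under scenario `ω`. -/
def Hder {N P Ω : Type} [Fintype N] [DecidableEq N] [Fintype P]
    (W : Finset (N × N)) (Ngrp : P → Finset N) (ℓ : N → N → ℕ)
    (d : N → ℕ → Ω → ℕ) (s0 : N → ℤ)
    (x : N → N → ℕ → ℕ) (s : N → P → ℕ → ℕ)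
    (start : ℕ) (ω : Ω) (i : N) (t : ℕ) : ℤ :=
  max 0 (Sder Ngrp s0 s start i t + Rder W ℓ x start i t
    - Dder W x start i (t - 1) - (d i t ω : ℤ))

theorem Finset.sum_Icc_eq_sum_Icc_pred_add {M : Type*} [AddCommMonoid M] (f : ℕ → M)
    {s a t : ℕ} (hsa : s ≤ a) (ha : 0 < a) (hat : a ≤ t + 1) :
    ∑ t' ∈ Icc s t, f t' = ∑ t' ∈ Icc s (a - 1), f t' + ∑ t' ∈ Icc a t, f t' := by
  have hpred : a - 1 + 1 = a := Nat.sub_add_cancel ha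
  simp only [← Ico_add_one_right_eq_Icc, hpred]
  exact (sum_Ico_consecutive f hsa hat).symm

theorem exists_block_of_mem_Ico {tb : ℕ → ℕ} {m t : ℕ} (ht : t ∈ Ico (tb 0) (tb m)) :
    ∃ k, 1 ≤ k ∧ k ≤ m ∧ t ∈ Ico (tb (k - 1)) (tb k) := by
  obtain ⟨hstart, hend⟩ := mem_Ico.mp ht
  have hex : ∃ k, t < tb k := ⟨m, hend⟩
  have hpos : Nat.find hex ≠ 0 := fun h0 => by
    have := Nat.find_spec hex
    rw [h0] at this
    omega
  refine ⟨Nat.find hex, by omega, Nat.find_min' hex hend, mem_Ico.mpr ⟨?_, Nat.find_spec hex⟩⟩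
  exact not_lt.mp (Nat.find_min hex (by omega))

def NoCrossing {N : Type} (W : Finset (N × N)) (ℓ : N → N → ℕ) (x : N → N → ℕ → ℕ)
    (start a : ℕ) (i : N) : Prop :=
  ∀ j, (j, i) ∈ W → ∀ t' ∈ Ico start a, a ≤ t' + ℓ j i → x j i t' = 0

section Balance

variable {N P : Type} [DecidableEq N] [Fintype P]

/-- `S_i^t + R_i^t - D_i^u`: for `u = t` the stock available at the end of period `t`, for
`u = t - 1` the quantity whose positive part is the excess at `t`. -/
def stockBalance [Fintype N] (W : Finset (N × N)) (Ngrp : P → Finset N) (ℓ : N → N → ℕ)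
    (s0 : N → ℤ) (x : N → N → ℕ → ℕ) (s : N → P → ℕ → ℕ) (start : ℕ) (i : N) (t u : ℕ) : ℤ :=
  Sder Ngrp s0 s start i t + Rder W ℓ x start i t - Dder W x start i u

theorem Sder_eq_add (Ngrp : P → Finset N) (s0 : N → ℤ) (s : N → P → ℕ → ℕ)
    (start : ℕ) (i : N) (t : ℕ) :
    Sder Ngrp s0 s start i t = s0 i + Sder Ngrp 0 s start i t := by
  simp [Sder]

theorem Sder_split (Ngrp : P → Finset N) (s0 : N → ℤ) (s : N → P → ℕ → ℕ) (i : N)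
    {start a t : ℕ} (hsa : start ≤ a) (ha : 0 < a) (hat : a ≤ t + 1) :
    Sder Ngrp s0 s start i t = Sder Ngrp s0 s start i (a - 1) + Sder Ngrp 0 s a i t := by
  simp only [Sder, Pi.zero_apply, zero_add, add_assoc, ← sum_add_distrib]
  congr 1
  refine sum_congr rfl fun p _ => ?_
  split_ifs
  · exact sum_Icc_eq_sum_Icc_pred_add _ hsa ha hat
  · simp

theorem Dder_split [Fintype N] (W : Finset (N × N)) (x : N → N → ℕ → ℕ) (i : N)
    {start a u : ℕ} (hsa : start ≤ a) (ha : 0 < a) (hau : a ≤ u + 1) :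
    Dder W x start i u = Dder W x start i (a - 1) + Dder W x a i u := by
  simp only [Dder, ← sum_add_distrib]
  exact sum_congr rfl fun j _ => sum_Icc_eq_sum_Icc_pred_add _ hsa ha hau

theorem Rder_split [Fintype N] (W : Finset (N × N)) (ℓ : N → N → ℕ) (x : N → N → ℕ → ℕ)
    (i : N) {start a t : ℕ} (hcross : NoCrossing W ℓ x start a i)
    (hsa : start ≤ a) (ha : 0 < a) (hat : a ≤ t + 1) :
    Rder W ℓ x start i t = Rder W ℓ x start i (a - 1) + Rder W ℓ x a i t := by
  rw [Rder, Rder, Rder, ← sum_add_distrib]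
  refine sum_congr rfl fun j hj => ?_
  rw [sum_filter, sum_filter, sum_filter, sum_Icc_eq_sum_Icc_pred_add _ hsa ha hat]
  congr 1
  refine sum_congr rfl fun t' ht' => ?_
  obtain ⟨hst', ht'a⟩ := mem_Icc.mp ht'
  by_cases hearly : t' + ℓ j i ≤ a - 1
  · rw [if_pos hearly, if_pos (by omega)]
  · have hzero := hcross j (mem_filter.mp hj).2 t' (mem_Ico.mpr ⟨hst', by omega⟩) (by omega)
    simp [hearly, hzero]

theorem stockBalance_restart [Fintype N] (W : Finset (N × N)) (Ngrp : P → Finset N)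
    (ℓ : N → N → ℕ) (s0 : N → ℤ) (x : N → N → ℕ → ℕ) (s : N → P → ℕ → ℕ) (i : N)
    {start a t u : ℕ} (hcross : NoCrossing W ℓ x start a i)
    (hsa : start ≤ a) (ha : 0 < a) (hat : a ≤ t + 1) (hau : a ≤ u + 1) :
    stockBalance W Ngrp ℓ s0 x s start i t u =
      stockBalance W Ngrp ℓ (fun j => stockBalance W Ngrp ℓ s0 x s start j (a - 1) (a - 1))
        x s a i t u := by
  rw [stockBalance, stockBalance, Sder_eq_add Ngrp _ s a i t, Sder_split Ngrp s0 s i hsa ha hat,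
    Rder_split W ℓ x i hcross hsa ha hat, Dder_split W x i hsa ha hau, stockBalance]
  ring

theorem stockBalance_pred_start [Fintype N] (W : Finset (N × N)) (Ngrp : P → Finset N)
    (ℓ : N → N → ℕ) (s0 : N → ℤ) (x : N → N → ℕ → ℕ) (s : N → P → ℕ → ℕ) (i : N) {a : ℕ}
    (ha : 0 < a) :
    stockBalance W Ngrp ℓ s0 x s a i (a - 1) (a - 1) = s0 i := by
  have hempty : Icc a (a - 1) = ∅ := Icc_eq_empty (by omega)
  simp [stockBalance, Sder, Rder, Dder, hempty]

theorem stockBalance_congr [Fintype N] (W : Finset (N × N)) (Ngrp : P → Finset N)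
    (ℓ : N → N → ℕ) (s0 : N → ℤ) {x x' : N → N → ℕ → ℕ} {s s' : N → P → ℕ → ℕ} (i : N)
    {a b t u : ℕ} (hx : ∀ t' ∈ Ico a b, ∀ j j', x j j' t' = x' j j' t')
    (hs : ∀ t' ∈ Ico a b, ∀ (j : N) (p : P), s j p t' = s' j p t')
    (htb : t < b) (hub : u < b) :
    stockBalance W Ngrp ℓ s0 x s a i t u = stockBalance W Ngrp ℓ s0 x' s' a i t u := by
  have hmem {t' v : ℕ} (hv : v < b) (ht' : t' ∈ Icc a v) : t' ∈ Ico a b :=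
    mem_Ico.mpr ⟨(mem_Icc.mp ht').1, (mem_Icc.mp ht').2.trans_lt hv⟩
  have hS : Sder Ngrp s0 s a i t = Sder Ngrp s0 s' a i t := by
    simp only [Sder]
    congr 1
    exact sum_congr rfl fun p _ => by
      congr 1
      exact sum_congr rfl fun t' ht' => by rw [hs t' (hmem htb ht')]
  have hR : Rder W ℓ x a i t = Rder W ℓ x' a i t :=
    sum_congr rfl fun j _ => sum_congr rfl fun t' ht' => by
      rw [hx t' (hmem htb (mem_filter.mp ht').1)]
  have hD : Dder W x a i u = Dder W x' a i u :=
    sum_congr rfl fun j _ => sum_congr rfl fun t' ht' => by rw [hx t' (hmem hub ht')]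
  rw [stockBalance, stockBalance, hS, hR, hD]

end Balance

section Blocks

variable {N P : Type} [Fintype P] {W : Finset (N × N)} {Ngrp : P → Finset N}
  {ℓ : N → N → ℕ} {K : ℕ} {tb : ℕ → ℕ} {xb : ℕ → N → N → ℕ → ℕ} {sb : ℕ → N → P → ℕ → ℕ}
  {xc : N → N → ℕ → ℕ} {sc : N → P → ℕ → ℕ}

theorem noCrossing_concat {i : N} {m : ℕ} (hmono : MonotoneOn tb (Set.Iic K)) (hm : m ≤ K)
    (hblock : ∀ k, 1 ≤ k → k ≤ K → NoCrossing W ℓ (xb k) (tb (k - 1)) (tb k) i)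
    (hxc : ∀ k, 1 ≤ k → k ≤ K → ∀ t ∈ Ico (tb (k - 1)) (tb k), ∀ i j, xc i j t = xb k i j t) :
    NoCrossing W ℓ xc (tb 0) (tb m) i := by
  intro j hW t' ht' hle
  obtain ⟨k, hk1, hkm, hmem⟩ := exists_block_of_mem_Ico ht'
  have hkm' : tb k ≤ tb m := hmono (Set.mem_Iic.mpr (hkm.trans hm)) (Set.mem_Iic.mpr hm) hkm
  rw [hxc k hk1 (hkm.trans hm) t' hmem]
  exact hblock k hk1 (hkm.trans hm) j hW t' hmem (hkm'.trans hle)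

theorem stockBalance_block_eq_concat [Fintype N] [DecidableEq N] {s0 : N → ℤ} {s0b : ℕ → N → ℤ} {i : N}
    {k t u : ℕ} (hmono : MonotoneOn tb (Set.Iic K)) (h0 : 0 < tb 0) (hk1 : 1 ≤ k) (hkK : k ≤ K)
    (hblock : ∀ k, 1 ≤ k → k ≤ K → NoCrossing W ℓ (xb k) (tb (k - 1)) (tb k) i)
    (hxc : ∀ k, 1 ≤ k → k ≤ K → ∀ t ∈ Ico (tb (k - 1)) (tb k), ∀ i j, xc i j t = xb k i j t)
    (hsc : ∀ k, 1 ≤ k → k ≤ K → ∀ t ∈ Ico (tb (k - 1)) (tb k),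
      ∀ (i : N) (p : P), sc i p t = sb k i p t)
    (hinit : ∀ j, s0b k j =
      stockBalance W Ngrp ℓ s0 xc sc (tb 0) j (tb (k - 1) - 1) (tb (k - 1) - 1))
    (hat : tb (k - 1) ≤ t + 1) (hau : tb (k - 1) ≤ u + 1) (htk : t < tb k) (huk : u < tb k) :
    stockBalance W Ngrp ℓ (s0b k) (xb k) (sb k) (tb (k - 1)) i t u =
      stockBalance W Ngrp ℓ s0 xc sc (tb 0) i t u := by
  have hprev : k - 1 ∈ Set.Iic K := Set.mem_Iic.mpr (by omega)
  have hstart : tb 0 ≤ tb (k - 1) := hmono (Set.mem_Iic.mpr (Nat.zero_le K)) hprev (Nat.zero_le _)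
  calc stockBalance W Ngrp ℓ (s0b k) (xb k) (sb k) (tb (k - 1)) i t u
      = stockBalance W Ngrp ℓ (s0b k) xc sc (tb (k - 1)) i t u :=
        stockBalance_congr W Ngrp ℓ _ i (fun t' h i j => (hxc k hk1 hkK t' h i j).symm)
          (fun t' h i p => (hsc k hk1 hkK t' h i p).symm) htk huk
    _ = stockBalance W Ngrp ℓ (fun j => stockBalance W Ngrp ℓ s0 xc sc (tb 0) j
          (tb (k - 1) - 1) (tb (k - 1) - 1)) xc sc (tb (k - 1)) i t u := by
        rw [funext hinit]
    _ = stockBalance W Ngrp ℓ s0 xc sc (tb 0) i t u :=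
        (stockBalance_restart W Ngrp ℓ s0 xc sc i
          (noCrossing_concat hmono hprev hblock hxc) hstart (by omega) hat hau).symm

theorem blockInitial_eq_stockBalance [Fintype N] [DecidableEq N] {s0 : N → ℤ} {s0b : ℕ → N → ℤ}
    (hmono : MonotoneOn tb (Set.Iic K)) (h0 : 0 < tb 0)
    (hblock : ∀ i, ∀ k, 1 ≤ k → k ≤ K → NoCrossing W ℓ (xb k) (tb (k - 1)) (tb k) i)
    (hxc : ∀ k, 1 ≤ k → k ≤ K → ∀ t ∈ Ico (tb (k - 1)) (tb k), ∀ i j, xc i j t = xb k i j t)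
    (hsc : ∀ k, 1 ≤ k → k ≤ K → ∀ t ∈ Ico (tb (k - 1)) (tb k),
      ∀ (i : N) (p : P), sc i p t = sb k i p t)
    (hs0b1 : ∀ i, s0b 1 i = s0 i)
    (hs0brec : ∀ k, 1 ≤ k → k < K → ∀ i, s0b (k + 1) i =
      stockBalance W Ngrp ℓ (s0b k) (xb k) (sb k) (tb (k - 1)) i (tb k - 1) (tb k - 1))
    {k : ℕ} (hk1 : 1 ≤ k) (hkK : k ≤ K) (i : N) :
    s0b k i = stockBalance W Ngrp ℓ s0 xc sc (tb 0) i (tb (k - 1) - 1) (tb (k - 1) - 1) := by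
  induction k, hk1 using Nat.le_induction generalizing i with
  | base => rw [hs0b1, Nat.sub_self, stockBalance_pred_start W Ngrp ℓ s0 xc sc i h0]
  | succ k hk1 ih =>
    have hstep : tb (k - 1) ≤ tb k := hmono (Set.mem_Iic.mpr (by omega))
      (Set.mem_Iic.mpr (by omega)) (by omega)
    have hpos : 0 < tb k := h0.trans_le (hmono (Set.mem_Iic.mpr (Nat.zero_le K))
      (Set.mem_Iic.mpr (by omega)) (Nat.zero_le k))
    rw [hs0brec k hk1 (by omega) i, Nat.add_sub_cancel]
    exact stockBalance_block_eq_concat hmono h0 hk1 (by omega) (hblock i) hxc hsc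
      (ih (by omega)) (by omega) (by omega) (by omega) (by omega)

end Blocks

theorem block_excess_eq_global_general
    (N P Ω : Type) [Fintype N] [DecidableEq N] [Fintype P]
    (W : Finset (N × N)) (Ngrp : P → Finset N)
    (s0 : N → ℤ) (ℓ : N → N → ℕ) (d : N → ℕ → Ω → ℕ)
    -- breakpoints 1 = tb 0 < tb 1 < ⋯ < tb K = q + 1
    (K : ℕ)
    (tb : ℕ → ℕ) (htb0 : tb 0 = 1)
    (htbmono : ∀ k < K, tb k < tb (k + 1))
    -- block solutions
    (xb : ℕ → N → N → ℕ → ℕ) (sb : ℕ → N → P → ℕ → ℕ)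
    -- block initial stocks: s0b 1 = s0 and recursively the available stock at the end of block k
    (s0b : ℕ → N → ℤ)
    (hs0b1 : ∀ i, s0b 1 i = s0 i)
    (hs0brec : ∀ k, 1 ≤ k → k < K → ∀ i,
      s0b (k + 1) i =
        Sder Ngrp (s0b k) (sb k) (tb (k - 1)) i (tb k - 1)
          + Rder W ℓ (xb k) (tb (k - 1)) i (tb k - 1)
          - Dder W (xb k) (tb (k - 1)) i (tb k - 1))
    -- no-crossing hypothesis: shipments sent in a block arrive within the block
    (hnocross : ∀ k, 1 ≤ k → k ≤ K → ∀ j i, (j, i) ∈ W →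
      ∀ t' ∈ Finset.Ico (tb (k - 1)) (tb k), tb k ≤ t' + ℓ j i → xb k j i t' = 0)
    -- the concatenated solution: at each t ∈ T_k it takes the block-k values
    (xc : N → N → ℕ → ℕ) (sc : N → P → ℕ → ℕ)
    (hxc : ∀ k, 1 ≤ k → k ≤ K → ∀ t ∈ Finset.Ico (tb (k - 1)) (tb k),
      ∀ i j, xc i j t = xb k i j t)
    (hsc : ∀ k, 1 ≤ k → k ≤ K → ∀ t ∈ Finset.Ico (tb (k - 1)) (tb k),
      ∀ (i : N) (p : P), sc i p t = sb k i p t) :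
    ∀ i : N, ∀ k, 1 ≤ k → k ≤ K → ∀ t ∈ Finset.Ico (tb (k - 1)) (tb k), ∀ ω : Ω,
      max 0 (Sder Ngrp (s0b k) (sb k) (tb (k - 1)) i t
          + Rder W ℓ (xb k) (tb (k - 1)) i t
          - Dder W (xb k) (tb (k - 1)) i (t - 1) - (d i t ω : ℤ))
        = Hder W Ngrp ℓ d s0 xc sc 1 ω i t := by
  intro i k hk1 hkK t ht ω
  have hmono : MonotoneOn tb (Set.Iic K) :=
    (strictMonoOn_Iic_of_lt_succ fun k hk => by simpa using htbmono k hk).monotoneOn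
  have h0 : 0 < tb 0 := by omega
  have hblock i k hk1 hkK : NoCrossing W ℓ (xb k) (tb (k - 1)) (tb k) i :=
    fun j => hnocross k hk1 hkK j i
  have hinit := blockInitial_eq_stockBalance hmono h0 hblock hxc hsc hs0b1 hs0brec hk1 hkK
  obtain ⟨hta, htk⟩ := mem_Ico.mp ht
  have hbalance := stockBalance_block_eq_concat (u := t - 1) hmono h0 hk1 hkK (hblock i) hxc hsc
    hinit (by omega) (by omega) htk (by omega)
  rw [htb0] at hbalance
  exact congrArg (fun z => max 0 (z - (d i t ω : ℤ))) hbalance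

/-- Under the no-crossing hypothesis, for every unit `i`, block `k`,
period `t ∈ T_k` and scenario `ω`, the excess computed within block `k` (from the block
initial stocks `s0b k`) equals the global excess `H_i^{tω}` of the concatenated solution,
computed on the whole horizon from the original initial stock `s0`:
`max{0, S_i^t(k) + R_i^t(k) − D_i^{t−1}(k) − d_i^{tω}} = H_i^{tω}`. -/
theorem block_excess_eq_global
    (N P Ω : Type) [Fintype N] [DecidableEq N] [Fintype P]
    (W : Finset (N × N)) (Ngrp : P → Finset N) (q : ℕ)
    (s0 : N → ℤ) (ℓ : N → N → ℕ) (d : N → ℕ → Ω → ℕ)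
    -- breakpoints 1 = tb 0 < tb 1 < ⋯ < tb K = q + 1
    (K : ℕ) (hK : 1 ≤ K)
    (tb : ℕ → ℕ) (htb0 : tb 0 = 1) (htbK : tb K = q + 1)
    (htbmono : ∀ k < K, tb k < tb (k + 1))
    -- block solutions
    (xb : ℕ → N → N → ℕ → ℕ) (sb : ℕ → N → P → ℕ → ℕ) (yb : ℕ → N → N → ℕ → ℕ)
    -- block initial stocks: s0b 1 = s0 and recursively the available stock at the end of block k
    (s0b : ℕ → N → ℤ)
    (hs0b1 : ∀ i, s0b 1 i = s0 i)
    (hs0brec : ∀ k, 1 ≤ k → k < K → ∀ i,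
      s0b (k + 1) i =
        Sder Ngrp (s0b k) (sb k) (tb (k - 1)) i (tb k - 1)
          + Rder W ℓ (xb k) (tb (k - 1)) i (tb k - 1)
          - Dder W (xb k) (tb (k - 1)) i (tb k - 1))
    -- no-crossing hypothesis: shipments sent in a block arrive within the block
    (hnocross : ∀ k, 1 ≤ k → k ≤ K → ∀ j i, (j, i) ∈ W →
      ∀ t' ∈ Finset.Ico (tb (k - 1)) (tb k), tb k ≤ t' + ℓ j i → xb k j i t' = 0)
    -- the concatenated solution: at each t ∈ T_k it takes the block-k values
    (xc : N → N → ℕ → ℕ) (sc : N → P → ℕ → ℕ) (yc : N → N → ℕ → ℕ)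
    (hxc : ∀ k, 1 ≤ k → k ≤ K → ∀ t ∈ Finset.Ico (tb (k - 1)) (tb k),
      ∀ i j, xc i j t = xb k i j t)
    (hsc : ∀ k, 1 ≤ k → k ≤ K → ∀ t ∈ Finset.Ico (tb (k - 1)) (tb k),
      ∀ (i : N) (p : P), sc i p t = sb k i p t)
    (hyc : ∀ k, 1 ≤ k → k ≤ K → ∀ t ∈ Finset.Ico (tb (k - 1)) (tb k),
      ∀ i j, yc i j t = yb k i j t) :
    ∀ i : N, ∀ k, 1 ≤ k → k ≤ K → ∀ t ∈ Finset.Ico (tb (k - 1)) (tb k), ∀ ω : Ω,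
      max 0 (Sder Ngrp (s0b k) (sb k) (tb (k - 1)) i t
          + Rder W ℓ (xb k) (tb (k - 1)) i t
          - Dder W (xb k) (tb (k - 1)) i (t - 1) - (d i t ω : ℤ))
        = Hder W Ngrp ℓ d s0 xc sc 1 ω i t :=
  block_excess_eq_global_general N P Ω W Ngrp s0 ℓ d K tb htb0 htbmono xb sb s0b hs0b1 hs0brec
    hnocross xc sc hxc hsc
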